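/- arXiv:1310.8107 — 2 statements merged into one kernel-verified Lean document; each statement's English description precedes it below -/
import Mathlib

section
/- Let Φ = {φ_k}_{k=1}^{M} be a frame for ℝ^N and put m := dim span X_Φ, where X_Φ := {φ_k φ_k^T : k = 1,...,M} ⊂ the space of real symmetric N×N matrices. Then Φ is scalable if and only if Φ is m-scalable. -/
open scoped BigOperators

namespace ScalableFrames

/-- The Euclidean dot product on `Fin n → ℝ`. -/
def dot {n : ℕ} (x y : Fin n → ℝ) : ℝ := ∑ i, x i * y i

/-- `Φ = {φ_k}_{k=1}^M` is a frame for `ℝ^N`: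
there are `0 < A, B` with `A‖x‖² ≤ ∑_k ⟨x, φ_k⟩² ≤ B‖x‖²` for all `x`. -/
def IsFrame {M N : ℕ} (Φ : Fin M → Fin N → ℝ) : Prop :=
  ∃ A B : ℝ, 0 < A ∧ 0 < B ∧ ∀ x : Fin N → ℝ,
    A * dot x x ≤ ∑ k, dot x (Φ k) ^ 2 ∧ ∑ k, dot x (Φ k) ^ 2 ≤ B * dot x x

/-- `Φ` is a tight frame for `ℝ^N` (the frame inequality holds with `A = B > 0`). -/
def IsTight {M N : ℕ} (Φ : Fin M → Fin N → ℝ) : Prop :=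
  ∃ A : ℝ, 0 < A ∧ ∀ x : Fin N → ℝ, ∑ k, dot x (Φ k) ^ 2 = A * dot x x

/-- The subfamily `{φ_i}_{i ∈ I}` is a tight frame for `ℝ^N`. -/
def IsTightOn {M N : ℕ} (Φ : Fin M → Fin N → ℝ) (I : Finset (Fin M)) : Prop :=
  ∃ A : ℝ, 0 < A ∧ ∀ x : Fin N → ℝ, ∑ k ∈ I, dot x (Φ k) ^ 2 = A * dot x x

/-- `Φ` is scalable: nonnegative scalars `c_k` make `{c_k φ_k}` a tight frame. -/
def IsScalable {M N : ℕ} (Φ : Fin M → Fin N → ℝ) : Prop :=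
  ∃ c : Fin M → ℝ, (∀ k, 0 ≤ c k) ∧ IsTight fun k => c k • Φ k

/-- `Φ` is strictly scalable: strictly positive scalars `c_k` make `{c_k φ_k}` a tight frame. -/
def IsStrictlyScalable {M N : ℕ} (Φ : Fin M → Fin N → ℝ) : Prop :=
  ∃ c : Fin M → ℝ, (∀ k, 0 < c k) ∧ IsTight fun k => c k • Φ k

/-- `Φ` is `m`-scalable: some subset `I` of size `m` admits nonnegative scalars `(c_i)_{i∈I}`
making `{c_i φ_i}_{i∈I}` a tight frame for `ℝ^N`. -/
def IsMScalable {M N : ℕ} (Φ : Fin M → Fin N → ℝ) (m : ℕ) : Prop :=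
  ∃ I : Finset (Fin M), I.card = m ∧
    ∃ c : Fin M → ℝ, (∀ i ∈ I, 0 ≤ c i) ∧ IsTightOn (fun k => c k • Φ k) I

/-- `Φ` is strictly `m`-scalable: some subset `I` of size `m` admits strictly positive scalars
`(c_i)_{i∈I}` making `{c_i φ_i}_{i∈I}` a tight frame for `ℝ^N`. -/
def IsStrictlyMScalable {M N : ℕ} (Φ : Fin M → Fin N → ℝ) (m : ℕ) : Prop :=
  ∃ I : Finset (Fin M), I.card = m ∧
    ∃ c : Fin M → ℝ, (∀ i ∈ I, 0 < c i) ∧ IsTightOn (fun k => c k • Φ k) I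

/-- The rank-one outer product `φφᵀ` as an `N×N` matrix. -/
def outer {N : ℕ} (φ : Fin N → ℝ) : Matrix (Fin N) (Fin N) ℝ := Matrix.vecMulVec φ φ

/-- `d = (N-1)(N+2)/2`. -/
def Fdim (N : ℕ) : ℕ := (N - 1) * (N + 2) / 2

/-- The map `F : ℝ^N → ℝ^d` obtained by stacking the blocks
`F_0(x) = (x_1²-x_2², …, x_1²-x_N²)` and `F_k(x) = (x_k x_{k+1}, …, x_k x_N)`, `k = 1,…,N-1`;
in `1`-based indexing the entry `x_k x_ℓ` sits at position `k(2N-1-k)/2 + ℓ - 1`. -/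
def Fmap {N : ℕ} (x : Fin N → ℝ) : Fin (Fdim N) → ℝ := fun j =>
  (if h : j.val + 1 < N then x ⟨0, by omega⟩ ^ 2 - x ⟨j.val + 1, h⟩ ^ 2 else 0) +
  ∑ a : Fin N, ∑ b : Fin N,
    if a.val < b.val ∧ j.val + 1 = (a.val + 1) * (2 * N - 2 - a.val) / 2 + b.val
    then x a * x b else 0

open Classical in
/-- `‖u‖₀`, the number of nonzero entries of `u`. -/
noncomputable def zeroNorm {n : ℕ} (u : Fin n → ℝ) : ℕ :=
  (Finset.univ.filter fun i => u i ≠ 0).card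

end ScalableFrames

/-!
Whether `{c_k φ_k}_{k ∈ I}` is tight depends on the scalars only through the frame operator
`∑_{k ∈ I} c_k² φ_k φ_kᵀ`, which must be a positive multiple of the identity. If `Φ` is scalable,
the conic Carathéodory theorem rewrites this multiple of the identity as a nonnegative
combination of linearly independent matrices `φ_k φ_kᵀ`, hence of at most `m` of them; square
roots of the new weights, padded by zero weights up to `m` indices, show that `Φ` is
`m`-scalable. Conversely, scalars on `I` extend by zero to all of `Φ`.
-/

open Finset Module Submodule

section ConicCaratheodory

variable {𝕜 ι V : Type*} [Field 𝕜] [LinearOrder 𝕜] [IsStrictOrderedRing 𝕜]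
  [AddCommGroup V] [Module 𝕜 V] {v : ι → V}

lemma exists_pos_sum_smul_eq_zero_of_not_linearIndepOn {s : Finset ι}
    (h : ¬LinearIndepOn 𝕜 v s) : ∃ g : ι → 𝕜, ∑ k ∈ s, g k • v k = 0 ∧ ∃ k ∈ s, 0 < g k := by
  obtain ⟨g, hg, k, hk, hgk⟩ := not_linearIndepOn_finset_iff.mp h
  rcases hgk.lt_or_gt with hneg | hpos
  · exact ⟨-g, by simp [neg_smul, sum_neg_distrib, hg], k, hk, neg_pos.2 hneg⟩
  · exact ⟨g, hg, k, hk, hpos⟩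

/-- One step of the conic Carathéodory argument: a dependence `∑ g k • v k = 0` with some
`g k > 0` lets us move the weights along `-g` until the first of them vanishes. -/
lemma exists_nonneg_sum_erase_smul_eq [DecidableEq ι] {s : Finset ι} {w : ι → 𝕜}
    (h : ¬LinearIndepOn 𝕜 v s) (hw : ∀ k ∈ s, 0 ≤ w k) :
    ∃ k₀ ∈ s, ∃ w' : ι → 𝕜, (∀ k ∈ s, 0 ≤ w' k) ∧
      ∑ k ∈ s.erase k₀, w' k • v k = ∑ k ∈ s, w k • v k := by
  obtain ⟨g, hg, k₁, hk₁, hgk₁⟩ := exists_pos_sum_smul_eq_zero_of_not_linearIndepOn h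
  obtain ⟨k₀, hk₀, hmin⟩ := (s.filter (0 < g ·)).exists_min_image (fun k => w k / g k)
    ⟨k₁, mem_filter.2 ⟨hk₁, hgk₁⟩⟩
  rw [mem_filter] at hk₀
  set r := w k₀ / g k₀
  have hr : 0 ≤ r := div_nonneg (hw _ hk₀.1) hk₀.2.le
  refine ⟨k₀, hk₀.1, fun k => w k - r * g k, fun k hk => ?_, ?_⟩
  · rcases le_or_gt (g k) 0 with hgk | hgk
    · nlinarith [hw k hk]
    · have := (le_div_iff₀ hgk).1 (hmin k (mem_filter.2 ⟨hk, hgk⟩))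
      linarith
  · rw [sum_erase s (by simp [r, div_mul_cancel₀ _ hk₀.2.ne'])]
    simp [sub_smul, sum_sub_distrib, mul_smul, ← smul_sum, hg]

/-- Carathéodory's theorem for cones. -/
theorem exists_linearIndepOn_nonneg_sum_smul_eq [DecidableEq ι] (s : Finset ι) {w : ι → 𝕜}
    (hw : ∀ k ∈ s, 0 ≤ w k) :
    ∃ t ⊆ s, LinearIndepOn 𝕜 v t ∧ ∃ w' : ι → 𝕜, (∀ k ∈ t, 0 ≤ w' k) ∧
      ∑ k ∈ t, w' k • v k = ∑ k ∈ s, w k • v k := by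
  induction s using Finset.strongInduction generalizing w with
  | H s ih =>
  by_cases h : LinearIndepOn 𝕜 v s
  · exact ⟨s, subset_rfl, h, w, hw, rfl⟩
  obtain ⟨k₀, hk₀, w₁, hw₁, hsum₁⟩ := exists_nonneg_sum_erase_smul_eq h hw
  obtain ⟨t, hts, ht, w', hw', hsum⟩ :=
    ih _ (erase_ssubset hk₀) (fun k hk => hw₁ k (mem_of_mem_erase hk))
  exact ⟨t, hts.trans (erase_subset _ _), ht, w', hw', hsum.trans hsum₁⟩

end ConicCaratheodory

lemma LinearIndepOn.card_le_finrank_span_range {R M ι : Type*} [DivisionRing R]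
    [AddCommGroup M] [Module R M] [Finite ι] {v : ι → M} {t : Finset ι}
    (h : LinearIndepOn R v t) : t.card ≤ finrank R (span R (Set.range v)) := by
  have hfin : FiniteDimensional R (span R (Set.range v)) :=
    FiniteDimensional.span_of_finite R (Set.finite_range v)
  calc t.card = Fintype.card (t : Set ι) := by simp
    _ = finrank R (span R (Set.range fun i : (t : Set ι) => v i)) := (finrank_span_eq_card h).symm
    _ ≤ finrank R (span R (Set.range v)) :=
        finrank_mono (span_mono (Set.range_comp_subset_range _ v))

namespace ScalableFrames

open Matrix

lemma dot_eq_dotProduct {n : ℕ} (x y : Fin n → ℝ) : dot x y = x ⬝ᵥ y := rfl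

lemma dotProduct_outer_mulVec {N : ℕ} (φ x : Fin N → ℝ) : x ⬝ᵥ outer φ *ᵥ x = dot x φ ^ 2 := by
  simp [outer, vecMulVec_mulVec, dot_eq_dotProduct, dotProduct_comm φ x, sq]

lemma sum_dot_smul_sq {ι : Type*} {N : ℕ} (Φ : ι → Fin N → ℝ) (c : ι → ℝ) (I : Finset ι)
    (x : Fin N → ℝ) :
    ∑ k ∈ I, dot x (c k • Φ k) ^ 2 = x ⬝ᵥ (∑ k ∈ I, c k ^ 2 • outer (Φ k)) *ᵥ x := by
  simp only [sum_mulVec, dotProduct_sum, smul_mulVec, dotProduct_smul, dotProduct_outer_mulVec,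
    dot_eq_dotProduct, smul_eq_mul, mul_pow]

lemma isTightOn_smul_congr {M N : ℕ} {Φ : Fin M → Fin N → ℝ} {c d : Fin M → ℝ}
    {I J : Finset (Fin M)}
    (h : ∑ k ∈ I, c k ^ 2 • outer (Φ k) = ∑ k ∈ J, d k ^ 2 • outer (Φ k)) :
    IsTightOn (fun k => c k • Φ k) I ↔ IsTightOn (fun k => d k • Φ k) J := by
  simp only [IsTightOn, sum_dot_smul_sq, h]

lemma sum_ite_sq_smul {ι R V : Type*} [DecidableEq ι] [Semiring R] [AddCommMonoid V] [Module R V]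
    {t u : Finset ι} (htu : t ⊆ u) (f : ι → R) (v : ι → V) :
    ∑ k ∈ u, (if k ∈ t then f k else 0) ^ 2 • v k = ∑ k ∈ t, f k ^ 2 • v k := by
  rw [← sum_subset htu fun k _ hk => by simp [hk]]
  exact sum_congr rfl fun k hk => by simp [hk]

theorem statement5_general {M N : ℕ} (Φ : Fin M → Fin N → ℝ) (m : ℕ)
    (hm : m = Module.finrank ℝ (Submodule.span ℝ (Set.range fun k => outer (Φ k)))) :
    IsScalable Φ ↔ IsMScalable Φ m := by
  classical
  constructor
  · rintro ⟨c, -, hc⟩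
    obtain ⟨t, -, ht, w, hw, hsum⟩ := exists_linearIndepOn_nonneg_sum_smul_eq
      (v := fun k => outer (Φ k)) univ (w := fun k => c k ^ 2) fun k _ => sq_nonneg (c k)
    have hmM : m ≤ M := hm ▸ (finrank_range_le_card _).trans (Fintype.card_fin M).le
    obtain ⟨u, htu, hu⟩ :=
      exists_superset_card_eq (hm ▸ ht.card_le_finrank_span_range) (by simpa using hmM)
    refine ⟨u, hu, fun k => if k ∈ t then √(w k) else 0, fun k _ => by positivity,
      (isTightOn_smul_congr ?_).mp hc⟩
    rw [sum_ite_sq_smul htu, ← hsum]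
    exact sum_congr rfl fun k hk => by rw [Real.sq_sqrt (hw k hk)]
  · rintro ⟨I, -, c, hc₀, hc⟩
    refine ⟨fun k => if k ∈ I then c k else 0, fun k => ?_,
      (isTightOn_smul_congr (sum_ite_sq_smul (subset_univ I) c _).symm).mp hc⟩
    dsimp only
    split_ifs with hk
    exacts [hc₀ k hk, le_rfl]

/-- Let `Φ = {φ_k}_{k=1}^M` be a frame for `ℝ^N` and put
`m := dim span {φ_k φ_kᵀ : k ∈ [M]}`. Then `Φ` is scalable iff `Φ` is `m`-scalable. -/
theorem statement5 {M N : ℕ} (Φ : Fin M → Fin N → ℝ) (hframe : IsFrame Φ) (m : ℕ)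
    (hm : m = Module.finrank ℝ (Submodule.span ℝ (Set.range fun k => outer (Φ k)))) :
    IsScalable Φ ↔ IsMScalable Φ m :=
  statement5_general Φ m hm

end ScalableFrames
end

section
/- Let M ≥ N ≥ 2 and N ≤ m ≤ M. If a frame Φ = {φ_k}_{k=1}^M for ℝ^N is strictly m-scalable, then there exists a subset I ⊆ {1,...,M} with #I = m such that ∩_{i∈I} H⁻(F(φ_i)) = ∅, where H⁻(v) := {y ∈ ℝ^d : ⟨v, y⟩ < 0}. -/
open scoped BigOperators

namespace ScalableFrames

/-- The open half space `H⁻(v) = {y : ⟨v, y⟩ < 0}`. -/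
def Hminus {d : ℕ} (v : Fin d → ℝ) : Set (Fin d → ℝ) := {y | dot v y < 0}

/-! The coordinates of `F(x)` are the quadratic forms `x₁² - x_ℓ²` and `x_k x_ℓ` (`k < ℓ`), all
orthogonal to the identity in the trace pairing. A tight frame `{ψ_i}` has frame operator
`∑ ψ_i ψ_iᵀ = A · Id`, hence `∑ F(ψ_i) = 0`. For `ψ_i = c_i φ_i` this is the positive relation
`∑ c_i² F(φ_i) = 0`, and a `y` in every `H⁻(F(φ_i))` would give `0 = ∑ c_i² ⟨F(φ_i), y⟩ < 0`. -/

lemma dot_single_one_left {n : ℕ} (a : Fin n) (v : Fin n → ℝ) :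
    dot (Pi.single a 1) v = v a := by
  simp [dot, Pi.single_apply, ite_mul]

lemma dot_add_left {n : ℕ} (x x' y : Fin n → ℝ) : dot (x + x') y = dot x y + dot x' y := by
  simp only [dot, Pi.add_apply, add_mul, Finset.sum_add_distrib]

lemma dot_sum_smul_left {n : ℕ} {ι : Type*} (I : Finset ι) (w : ι → ℝ) (v : ι → Fin n → ℝ)
    (y : Fin n → ℝ) : dot (∑ k ∈ I, w k • v k) y = ∑ k ∈ I, w k * dot (v k) y := by
  simp only [dot, Finset.sum_apply, Pi.smul_apply, smul_eq_mul, Finset.sum_mul, Finset.mul_sum]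
  rw [Finset.sum_comm]
  exact Finset.sum_congr rfl fun _ _ => Finset.sum_congr rfl fun _ _ => by ring

section TightFrameOperator

variable {M N : ℕ} {ψ : Fin M → Fin N → ℝ} {I : Finset (Fin M)} {A : ℝ}

lemma sum_sq_apply_of_tight (h : ∀ x, ∑ k ∈ I, dot x (ψ k) ^ 2 = A * dot x x) (a : Fin N) :
    ∑ k ∈ I, ψ k a ^ 2 = A := by
  simpa [dot_single_one_left] using h (Pi.single a 1)

lemma sum_mul_apply_of_tight (h : ∀ x, ∑ k ∈ I, dot x (ψ k) ^ 2 = A * dot x x) {a b : Fin N}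
    (hab : a ≠ b) : ∑ k ∈ I, ψ k a * ψ k b = 0 := by
  have hsum := h (Pi.single a 1 + Pi.single b 1)
  simp only [dot_add_left, dot_single_one_left] at hsum
  have hexpand : ∑ k ∈ I, (ψ k a + ψ k b) ^ 2
      = ∑ k ∈ I, ψ k a ^ 2 + 2 * ∑ k ∈ I, ψ k a * ψ k b + ∑ k ∈ I, ψ k b ^ 2 := by
    rw [Finset.mul_sum, ← Finset.sum_add_distrib, ← Finset.sum_add_distrib]
    exact Finset.sum_congr rfl fun _ _ => by ring
  rw [hexpand, sum_sq_apply_of_tight h, sum_sq_apply_of_tight h] at hsum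
  simp [hab, hab.symm] at hsum
  linarith

lemma sum_Fmap_eq_zero_of_tight (h : ∀ x, ∑ k ∈ I, dot x (ψ k) ^ 2 = A * dot x x) :
    ∑ k ∈ I, Fmap (ψ k) = 0 := by
  funext j
  simp only [Finset.sum_apply, Pi.zero_apply, Fmap, Finset.sum_add_distrib]
  have hdiff : ∑ k ∈ I, (if hj : j.val + 1 < N then
      ψ k ⟨0, by omega⟩ ^ 2 - ψ k ⟨j.val + 1, hj⟩ ^ 2 else 0) = 0 := by
    split_ifs
    · rw [Finset.sum_sub_distrib, sum_sq_apply_of_tight h, sum_sq_apply_of_tight h, sub_self]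
    · exact Finset.sum_const_zero
  have hprod : ∑ k ∈ I, ∑ a : Fin N, ∑ b : Fin N,
      (if a.val < b.val ∧ j.val + 1 = (a.val + 1) * (2 * N - 2 - a.val) / 2 + b.val
        then ψ k a * ψ k b else 0) = 0 := by
    rw [Finset.sum_comm]
    refine Finset.sum_eq_zero fun a _ => ?_
    rw [Finset.sum_comm]
    refine Finset.sum_eq_zero fun b _ => ?_
    split_ifs with hab
    · exact sum_mul_apply_of_tight h (Fin.ne_of_lt hab.1)
    · exact Finset.sum_const_zero
  rw [hdiff, hprod, add_zero]

end TightFrameOperator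

lemma Fmap_smul {N : ℕ} (c : ℝ) (x : Fin N → ℝ) : Fmap (c • x) = c ^ 2 • Fmap x := by
  funext j
  simp only [Fmap, Pi.smul_apply, smul_eq_mul, mul_add, Finset.mul_sum]
  congr 1
  · split_ifs <;> ring
  · exact Finset.sum_congr rfl fun _ _ => Finset.sum_congr rfl fun _ _ => by split_ifs <;> ring

lemma iInter_Hminus_eq_empty_of_sum_smul_eq_zero {d : ℕ} {ι : Type*} {I : Finset ι}
    (hI : I.Nonempty) {w : ι → ℝ} (hw : ∀ i ∈ I, 0 < w i) {v : ι → Fin d → ℝ}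
    (hsum : ∑ i ∈ I, w i • v i = 0) : ⋂ i ∈ I, Hminus (v i) = ∅ := by
  refine Set.eq_empty_of_forall_notMem fun y hy => ?_
  simp only [Set.mem_iInter, Hminus, Set.mem_ofPred_eq] at hy
  have hneg : ∑ i ∈ I, w i * dot (v i) y < 0 :=
    Finset.sum_neg (fun i hi => mul_neg_of_pos_of_neg (hw i hi) (hy i hi)) hI
  rw [← dot_sum_smul_left, hsum] at hneg
  simp [dot] at hneg

theorem statement10_general {M N m : ℕ} (hN : 2 ≤ N) (hNm : N ≤ m)
    (Φ : Fin M → Fin N → ℝ)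
    (hsc : IsStrictlyMScalable Φ m) :
    ∃ I : Finset (Fin M), I.card = m ∧ (⋂ i ∈ I, Hminus (Fmap (Φ i))) = ∅ := by
  obtain ⟨I, hIcard, c, hc, A, -, htight⟩ := hsc
  refine ⟨I, hIcard, iInter_Hminus_eq_empty_of_sum_smul_eq_zero
    (Finset.card_pos.mp (by omega)) (w := fun k => c k ^ 2) (fun k hk => pow_pos (hc k hk) 2) ?_⟩
  simpa [Fmap_smul] using sum_Fmap_eq_zero_of_tight htight

/-- Let `M ≥ N ≥ 2` and `N ≤ m ≤ M`. If a frame `Φ` for `ℝ^N` is strictly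
`m`-scalable, then there is `I ⊆ [M]` with `#I = m` such that `⋂_{i ∈ I} H⁻(F(φ_i)) = ∅`. -/
theorem statement10 {M N m : ℕ} (hN : 2 ≤ N) (hNm : N ≤ m) (hmM : m ≤ M)
    (Φ : Fin M → Fin N → ℝ) (hframe : IsFrame Φ)
    (hsc : IsStrictlyMScalable Φ m) :
    ∃ I : Finset (Fin M), I.card = m ∧ (⋂ i ∈ I, Hminus (Fmap (Φ i))) = ∅ :=
  statement10_general hN hNm Φ hsc

end ScalableFrames
end
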